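/- Let m > 1 and α be real numbers, let 0 < a < b, and let Ω = {x ∈ ℝ² : a < |x| < b}. Every smooth function u : ℝ² → ℝ whose closed support is a compact subset of Ω satisfies the identity ∫_Ω ((𝓛_m u)(x))²·|x|^α dx = ∫_Ω (Δu(x) + (m²−1)·u(x)/|x|²)²·|x|^α dx + 4(m²−1)·∫_Ω ((x·∇u(x))/|x|² − u(x)/|x|²)²·|x|^α dx − 2α(m−1)·∫_Ω ((x·∇u(x))/|x|²)²·|x|^α dx + 2α(m−1)·∫_Ω ((x₁·∂₂u(x) − x₂·∂₁u(x))²/|x|⁴)·|x|^α dx − 2α(m−1)(m²−1+α)·∫_Ω (u(x)²/|x|⁴)·|x|^α dx. -/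

import Mathlib

/-!
Away from the origin, `(𝓛_m u)² |x|^α` is the integrand of the right-hand side plus `2(m-1) div V`
for the vector field
`V = |x|^(α-2) (2 (x·∇u) ∇u - |∇u|² x - 2u ∇u) + (m² + α + 1) |x|^(α-4) u² x`.
Second derivatives enter `div V` only through `Δu`, and with `|x|² |∇u|² = (x·∇u)² + (∂_θ u)²`
the pointwise identity is algebraic. As `u` vanishes near the origin and outside a compact subset
of the annulus, `V` is `C¹` with compact support in the annulus, so `∫ div V = 0`.
-/

open MeasureTheory

noncomputable section

/-- The open annulus `{x ∈ ℝ² : a < |x| < b}`, with `ℝ²` identified with `ℂ`. -/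
def ann (a b : ℝ) : Set ℂ := {z : ℂ | a < ‖z‖ ∧ ‖z‖ < b}

/-- First partial derivative `∂₁u` of a function on `ℝ² ≅ ℂ`. -/
def pd1 (u : ℂ → ℝ) (z : ℂ) : ℝ := fderiv ℝ u z 1

/-- Second partial derivative `∂₂u` of a function on `ℝ² ≅ ℂ`. -/
def pd2 (u : ℂ → ℝ) (z : ℂ) : ℝ := fderiv ℝ u z Complex.I

/-- The Euclidean Laplacian `Δu = ∂₁∂₁u + ∂₂∂₂u`. -/
def lap (u : ℂ → ℝ) (z : ℂ) : ℝ := pd1 (pd1 u) z + pd2 (pd2 u) z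

/-- The operator `𝓛_m u = Δu + 2(m−1)(x·∇u)/|x|² + (m−1)²u/|x|²`. -/
def Lop (m : ℝ) (u : ℂ → ℝ) (z : ℂ) : ℝ :=
  lap u z + 2 * (m - 1) * (z.re * pd1 u z + z.im * pd2 u z) / ‖z‖ ^ 2
    + (m - 1) ^ 2 * u z / ‖z‖ ^ 2

open Set Function

section IntegrationByParts

variable {E : Type*} [NormedAddCommGroup E] [NormedSpace ℝ E] [MeasurableSpace E] [BorelSpace E]
  {μ : Measure E} {f : E → ℝ}

theorem HasCompactSupport.integrable_fderiv_apply [IsFiniteMeasureOnCompacts μ]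
    (hcs : HasCompactSupport f) (hf : ContDiff ℝ 1 f) (v : E) :
    Integrable (fun x => fderiv ℝ f x v) μ :=
  ((hf.continuous_fderiv_apply one_ne_zero).comp (continuous_id.prodMk continuous_const))
    |>.integrable_of_hasCompactSupport (hcs.fderiv_apply ℝ v)

theorem HasCompactSupport.integral_fderiv_apply_eq_zero [FiniteDimensional ℝ E]
    [μ.IsAddHaarMeasure] (hcs : HasCompactSupport f) (hf : ContDiff ℝ 1 f) (v : E) :
    ∫ x, fderiv ℝ f x v ∂μ = 0 := by
  simpa using integral_mul_fderiv_eq_neg_fderiv_mul_of_integrable (μ := μ)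
    (f := fun _ => (1 : ℝ)) (g := f) (v := v) (by simp)
    (by simpa using hcs.integrable_fderiv_apply hf v)
    (by simpa using hf.continuous.integrable_of_hasCompactSupport hcs)
    (fun _ _ => differentiableAt_const _) (fun x _ => hf.differentiable one_ne_zero x)

theorem HasCompactSupport.setIntegral_fderiv_apply_eq_zero [FiniteDimensional ℝ E]
    [μ.IsAddHaarMeasure] {s : Set E} (hcs : HasCompactSupport f) (hf : ContDiff ℝ 1 f)
    (hs : tsupport f ⊆ s) (v : E) : ∫ x in s, fderiv ℝ f x v ∂μ = 0 := by
  rw [setIntegral_eq_integral_of_forall_compl_eq_zero fun x hx => by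
    simp [fderiv_of_notMem_tsupport ℝ fun h => hx (hs h)]]
  exact hcs.integral_fderiv_apply_eq_zero hf v

end IntegrationByParts

theorem IsCompact.integrable_of_continuousAt {X E : Type*} [TopologicalSpace X] [T2Space X]
    [MeasurableSpace X] [OpensMeasurableSpace X] [NormedAddCommGroup E] {μ : Measure X}
    [IsFiniteMeasureOnCompacts μ] {K : Set X} (hK : IsCompact K) {F : X → E}
    (hF : ∀ x ∈ K, ContinuousAt F x) (h0 : ∀ x ∉ K, F x = 0) : Integrable F μ :=
  ((continuousOn_of_forall_continuousAt hF).integrableOn_compact hK)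
    |>.integrable_of_forall_notMem_eq_zero h0

theorem hasFDerivAt_norm_rpow_of_ne_zero {E : Type*} [NormedAddCommGroup E]
    [InnerProductSpace ℝ E] (p : ℝ) {x : E} (hx : x ≠ 0) :
    HasFDerivAt (fun y : E => ‖y‖ ^ p) ((p * ‖x‖ ^ (p - 2)) • innerSL ℝ x) x := by
  have hpow (y : E) (q : ℝ) : (‖y‖ ^ 2) ^ (q / 2) = ‖y‖ ^ q := by
    rw [← Real.rpow_natCast, ← Real.rpow_mul (norm_nonneg y)]; ring_nf
  have hsq : HasFDerivAt (fun y : E => ‖y‖ ^ 2) (2 • innerSL ℝ x) x := by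
    simpa using (hasFDerivAt_id x).norm_sq
  have h := hsq.rpow_const (p := p / 2) (Or.inl (by positivity))
  simp only [hpow, show p / 2 - 1 = (p - 2) / 2 by ring] at h
  refine h.congr_fderiv ?_
  rw [← Nat.cast_smul_eq_nsmul ℝ, smul_smul]
  congr 1
  ring

theorem norm_rpow_add_two (β : ℝ) {z : ℂ} (hz : z ≠ 0) :
    ‖z‖ ^ (β + 2) = ‖z‖ ^ β * (z.re ^ 2 + z.im ^ 2) := by
  rw [Real.rpow_add (norm_pos_iff.2 hz), Real.rpow_two, Complex.sq_norm, Complex.normSq_apply]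
  ring

theorem contDiff_fderiv_apply_const {𝕜 E F : Type*} [NontriviallyNormedField 𝕜]
    [NormedAddCommGroup E] [NormedSpace 𝕜 E] [NormedAddCommGroup F] [NormedSpace 𝕜 F]
    {f : E → F} {n : WithTop ℕ∞} (hf : ContDiff 𝕜 (n + 1) f) (v : E) :
    ContDiff 𝕜 n (fun x => fderiv 𝕜 f x v) :=
  (hf.fderiv_right le_rfl).clm_apply contDiff_const

section PartialDerivatives

variable {u : ℂ → ℝ}

theorem pd1_pd2_comm (hu : ContDiff ℝ 2 u) (z : ℂ) : pd1 (pd2 u) z = pd2 (pd1 u) z := by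
  have hdiff : Differentiable ℝ (fderiv ℝ u) :=
    (hu.fderiv_right (m := 1) (by norm_num)).differentiable one_ne_zero
  have hsymm := second_derivative_symmetric
    (fun y => (hu.differentiable two_ne_zero y).hasFDerivAt) (hdiff z).hasFDerivAt 1 Complex.I
  change fderiv ℝ (fun w => fderiv ℝ u w Complex.I) z 1 =
    fderiv ℝ (fun w => fderiv ℝ u w 1) z Complex.I
  rw [fderiv_clm_apply (hdiff z) (differentiableAt_const _),
    fderiv_clm_apply (hdiff z) (differentiableAt_const _)]
  simpa using hsymm

theorem continuous_lap (hu : ContDiff ℝ 2 u) : Continuous (lap u) :=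
  have hpd (e : ℂ) := contDiff_fderiv_apply_const (n := 1) hu e
  ((contDiff_fderiv_apply_const (n := 0) (hpd 1) 1).continuous).add
    ((contDiff_fderiv_apply_const (n := 0) (hpd Complex.I) Complex.I).continuous)

theorem tsupport_pd1_subset : tsupport (pd1 u) ⊆ tsupport u := tsupport_fderiv_apply_subset ℝ 1

theorem tsupport_pd2_subset : tsupport (pd2 u) ⊆ tsupport u :=
  tsupport_fderiv_apply_subset ℝ Complex.I

theorem tsupport_lap_subset : tsupport (lap u) ⊆ tsupport u :=
  (tsupport_add _ _).trans (union_subset (tsupport_pd1_subset.trans tsupport_pd1_subset)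
    (tsupport_pd2_subset.trans tsupport_pd2_subset))

end PartialDerivatives

section Flux

/-- `flux α C u e z = ⟪V z, e⟫` for the field `V` above, with `C` in place of `m² + α + 1`. -/
def flux (α C : ℝ) (u : ℂ → ℝ) (e z : ℂ) : ℝ :=
  ‖z‖ ^ (α - 2) * (2 * (z.re * pd1 u z + z.im * pd2 u z) * fderiv ℝ u z e
      - inner ℝ e z * (pd1 u z ^ 2 + pd2 u z ^ 2) - 2 * u z * fderiv ℝ u z e)
    + C * ‖z‖ ^ (α - 4) * u z ^ 2 * inner ℝ e z

variable {α C : ℝ} {u : ℂ → ℝ}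

theorem divergence_flux (hu : ContDiff ℝ 2 u) {z : ℂ} (hz : z ≠ 0) :
    fderiv ℝ (flux α C u 1) z 1 + fderiv ℝ (flux α C u Complex.I) z Complex.I =
      ‖z‖ ^ (α - 2) * (2 * (z.re * pd1 u z + z.im * pd2 u z - u z) * lap u z
          - 2 * (pd1 u z ^ 2 + pd2 u z ^ 2))
        + ‖z‖ ^ (α - 4) * ((α - 2) * (2 * (z.re * pd1 u z + z.im * pd2 u z) ^ 2
            - ‖z‖ ^ 2 * (pd1 u z ^ 2 + pd2 u z ^ 2)
            - 2 * u z * (z.re * pd1 u z + z.im * pd2 u z))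
          + C * ((α - 2) * u z ^ 2 + 2 * u z * (z.re * pd1 u z + z.im * pd2 u z))) := by
  have hre : HasFDerivAt Complex.re Complex.reCLM z := Complex.reCLM.hasFDerivAt
  have him : HasFDerivAt Complex.im Complex.imCLM z := Complex.imCLM.hasFDerivAt
  have hu' := (hu.differentiable two_ne_zero z).hasFDerivAt
  have hpd (e : ℂ) :=
    ((contDiff_fderiv_apply_const (n := 1) hu e).differentiable one_ne_zero z).hasFDerivAt
  have hw₂ := hasFDerivAt_norm_rpow_of_ne_zero (α - 2) hz
  have hw₄ := hasFDerivAt_norm_rpow_of_ne_zero (α - 4) hz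
  have hrad := (hre.mul (hpd 1)).add (him.mul (hpd Complex.I))
  have hgrad := ((hpd 1).pow 2).add ((hpd Complex.I).pow 2)
  have hflux (e : ℂ) : HasFDerivAt (flux α C u e) _ z :=
    (hw₂.mul ((((hrad.const_mul 2).mul (hpd e)).sub ((innerSL ℝ e).hasFDerivAt.mul hgrad)).sub
      ((hu'.const_mul 2).mul (hpd e)))).add
      (((hw₄.const_mul C).mul (hu'.pow 2)).mul (innerSL ℝ e).hasFDerivAt)
  have hsymm := pd1_pd2_comm hu z
  rw [(hflux 1).fderiv, (hflux Complex.I).fderiv]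
  unfold lap pd1 pd2 at *
  simp only [Pi.add_apply, Pi.mul_apply, Pi.sub_apply, add_apply,
    smul_apply, sub_apply, smul_add, smul_eq_mul,
    nsmul_eq_mul, Nat.cast_ofNat, Nat.add_one_sub_one, pow_one, coe_innerSL_apply, Complex.inner,
    Complex.reCLM_apply, Complex.imCLM_apply, map_one, Complex.conj_re, Complex.conj_im,
    Complex.conj_I, Complex.mul_re, Complex.one_re, Complex.one_im, Complex.I_re, Complex.I_im,
    Complex.neg_re, mul_one, mul_zero, zero_mul, add_zero, zero_add, zero_sub, neg_neg, mul_neg,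
    sub_neg_eq_add, inner_self_eq_norm_sq_to_K, norm_one, one_pow, one_mul,
    Complex.norm_I]
  rw [hsymm, show α - 4 - 2 = α - 6 by ring, show α - 2 - 2 = α - 4 by ring,
    show α - 2 = α - 4 + 2 by ring, show α - 4 = α - 6 + 2 by ring, norm_rpow_add_two _ hz,
    norm_rpow_add_two _ hz, Complex.sq_norm, Complex.normSq_apply]
  ring

theorem flux_eq_zero_of_notMem_tsupport {z : ℂ} (hz : z ∉ tsupport u) (e : ℂ) :
    flux α C u e z = 0 := by
  have hd : fderiv ℝ u z = 0 := notMem_support.1 fun h => hz (support_fderiv_subset ℝ h)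
  simp [flux, pd1, pd2, hd, image_eq_zero_of_notMem_tsupport hz]

theorem tsupport_flux_subset (e : ℂ) : tsupport (flux α C u e) ⊆ tsupport u :=
  closure_minimal (fun _ hz => by_contra fun h => hz (flux_eq_zero_of_notMem_tsupport h e))
    (isClosed_tsupport u)

theorem contDiff_flux (hu : ContDiff ℝ 2 u) (h0 : (0 : ℂ) ∉ tsupport u) (e : ℂ) :
    ContDiff ℝ 1 (flux α C u e) := by
  refine contMDiff_iff_contDiff.1 (contMDiff_of_tsupport fun z hz => ?_)
  have hz0 : z ≠ 0 := fun h => h0 (h ▸ tsupport_flux_subset e hz)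
  have hpd (e : ℂ) := (contDiff_fderiv_apply_const (n := 1) hu e).contDiffAt (x := z)
  have hw (p : ℝ) : ContDiffAt ℝ 1 (fun w : ℂ => ‖w‖ ^ p) z :=
    (contDiffAt_norm ℝ hz0).rpow_const_of_ne (norm_ne_zero_iff.2 hz0)
  have hw₂ := hw (α - 2)
  have hw₄ := hw (α - 4)
  have hre : ContDiffAt ℝ 1 Complex.re z := Complex.reCLM.contDiff.contDiffAt
  have him : ContDiffAt ℝ 1 Complex.im z := Complex.imCLM.contDiff.contDiffAt
  have hinner : ContDiffAt ℝ 1 (fun w => inner ℝ e w) z := (innerSL ℝ e).contDiff.contDiffAt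
  have hu1 : ContDiffAt ℝ 1 u z := (hu.of_le (by norm_num)).contDiffAt
  exact contMDiffAt_iff_contDiffAt.2 (by unfold flux pd1 pd2; fun_prop)

theorem hasCompactSupport_flux (hcs : IsCompact (tsupport u)) (e : ℂ) :
    HasCompactSupport (flux α C u e) :=
  hcs.of_isClosed_subset (isClosed_tsupport _) (tsupport_flux_subset e)

theorem integrable_divergence_flux (hu : ContDiff ℝ 2 u) (hcs : IsCompact (tsupport u))
    (h0 : (0 : ℂ) ∉ tsupport u) :
    Integrable fun z =>
      fderiv ℝ (flux α C u 1) z 1 + fderiv ℝ (flux α C u Complex.I) z Complex.I :=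
  ((hasCompactSupport_flux hcs 1).integrable_fderiv_apply (contDiff_flux hu h0 1) 1).fun_add
    ((hasCompactSupport_flux hcs _).integrable_fderiv_apply (contDiff_flux hu h0 _) _)

theorem setIntegral_divergence_flux_eq_zero (hu : ContDiff ℝ 2 u) (hcs : IsCompact (tsupport u))
    (h0 : (0 : ℂ) ∉ tsupport u) {s : Set ℂ} (hs : tsupport u ⊆ s) :
    ∫ z in s, (fderiv ℝ (flux α C u 1) z 1 + fderiv ℝ (flux α C u Complex.I) z Complex.I)
      = 0 := by
  have hint (e : ℂ) : IntegrableOn (fun z => fderiv ℝ (flux α C u e) z e) s :=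
    ((hasCompactSupport_flux hcs e).integrable_fderiv_apply (contDiff_flux hu h0 e) e).integrableOn
  have hzero (e : ℂ) : ∫ z in s, fderiv ℝ (flux α C u e) z e = 0 :=
    (hasCompactSupport_flux hcs e).setIntegral_fderiv_apply_eq_zero (contDiff_flux hu h0 e)
      ((tsupport_flux_subset e).trans hs) e
  rw [integral_add (hint 1) (hint Complex.I), hzero, hzero, add_zero]

end Flux

theorem Lop_sq_mul_norm_rpow_eq (m α : ℝ) {u : ℂ → ℝ} (hu : ContDiff ℝ 2 u) {z : ℂ}
    (hz : z ≠ 0) :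
    Lop m u z ^ 2 * ‖z‖ ^ α =
      (lap u z + (m ^ 2 - 1) * u z / ‖z‖ ^ 2) ^ 2 * ‖z‖ ^ α
      + 4 * (m ^ 2 - 1) *
          (((z.re * pd1 u z + z.im * pd2 u z) / ‖z‖ ^ 2 - u z / ‖z‖ ^ 2) ^ 2 * ‖z‖ ^ α)
      - 2 * α * (m - 1) * (((z.re * pd1 u z + z.im * pd2 u z) / ‖z‖ ^ 2) ^ 2 * ‖z‖ ^ α)
      + 2 * α * (m - 1) * ((z.re * pd2 u z - z.im * pd1 u z) ^ 2 / ‖z‖ ^ 4 * ‖z‖ ^ α)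
      - 2 * α * (m - 1) * (m ^ 2 - 1 + α) * (u z ^ 2 / ‖z‖ ^ 4 * ‖z‖ ^ α)
      + 2 * (m - 1) * (fderiv ℝ (flux α (m ^ 2 + α + 1) u 1) z 1
          + fderiv ℝ (flux α (m ^ 2 + α + 1) u Complex.I) z Complex.I) := by
  have hsq : ‖z‖ ^ 2 = z.re ^ 2 + z.im ^ 2 := by
    rw [Complex.sq_norm, Complex.normSq_apply]; ring
  have hs : z.re ^ 2 + z.im ^ 2 ≠ 0 := hsq ▸ pow_ne_zero 2 (norm_ne_zero_iff.2 hz)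
  have w₀ : ‖z‖ ^ α = ‖z‖ ^ (α - 2) * (z.re ^ 2 + z.im ^ 2) := by
    rw [← norm_rpow_add_two _ hz, sub_add_cancel]
  have w₂ : ‖z‖ ^ (α - 2) = ‖z‖ ^ (α - 4) * (z.re ^ 2 + z.im ^ 2) := by
    rw [← norm_rpow_add_two _ hz]; ring_nf
  rw [divergence_flux hu hz, Lop, w₀, w₂, show ‖z‖ ^ 4 = (‖z‖ ^ 2) ^ 2 by ring, hsq]
  field_simp
  ring

theorem isOpen_ann (a b : ℝ) : IsOpen (ann a b) :=
  (isOpen_lt continuous_const continuous_norm).inter (isOpen_lt continuous_norm continuous_const)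

theorem statement2_general (m α : ℝ) (a b : ℝ) (ha : 0 < a)
    (u : ℂ → ℝ) (hu : ContDiff ℝ (⊤ : ℕ∞) u) (hcs : IsCompact (tsupport u))
    (hsupp : tsupport u ⊆ ann a b) :
    (∫ z in ann a b, Lop m u z ^ 2 * ‖z‖ ^ α) =
      (∫ z in ann a b,
          (lap u z + (m ^ 2 - 1) * u z / ‖z‖ ^ 2) ^ 2 * ‖z‖ ^ α) +
        4 * (m ^ 2 - 1) *
          (∫ z in ann a b,
            ((z.re * pd1 u z + z.im * pd2 u z) / ‖z‖ ^ 2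
              - u z / ‖z‖ ^ 2) ^ 2 * ‖z‖ ^ α) -
        2 * α * (m - 1) *
          (∫ z in ann a b,
            ((z.re * pd1 u z + z.im * pd2 u z) / ‖z‖ ^ 2) ^ 2 *
              ‖z‖ ^ α) +
        2 * α * (m - 1) *
          (∫ z in ann a b,
            (z.re * pd2 u z - z.im * pd1 u z) ^ 2 / ‖z‖ ^ 4 *
              ‖z‖ ^ α) -
        2 * α * (m - 1) * (m ^ 2 - 1 + α) *
          (∫ z in ann a b, u z ^ 2 / ‖z‖ ^ 4 * ‖z‖ ^ α) := by
  have hu2 : ContDiff ℝ 2 u := hu.of_le (WithTop.coe_le_coe.2 le_top)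
  have hne : ∀ z ∈ ann a b, z ≠ 0 := by
    rintro z ⟨hz, -⟩ rfl
    rw [norm_zero] at hz
    exact ha.not_gt hz
  have h0 : (0 : ℂ) ∉ tsupport u := fun h => hne 0 (hsupp h) rfl
  have hvan : ∀ z ∉ tsupport u, u z = 0 ∧ pd1 u z = 0 ∧ pd2 u z = 0 ∧ lap u z = 0 :=
    fun z hz => ⟨image_eq_zero_of_notMem_tsupport hz,
      image_eq_zero_of_notMem_tsupport fun h => hz (tsupport_pd1_subset h),
      image_eq_zero_of_notMem_tsupport fun h => hz (tsupport_pd2_subset h),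
      image_eq_zero_of_notMem_tsupport fun h => hz (tsupport_lap_subset h)⟩
  have hu₀ : Continuous u := hu.continuous
  have hu₁ : Continuous (pd1 u) := (contDiff_fderiv_apply_const (n := 1) hu2 1).continuous
  have hu₂ : Continuous (pd2 u) :=
    (contDiff_fderiv_apply_const (n := 1) hu2 Complex.I).continuous
  have hu₃ : Continuous (lap u) := continuous_lap hu2
  rw [setIntegral_congr_fun (isOpen_ann a b).measurableSet
      fun z hz => Lop_sq_mul_norm_rpow_eq m α hu2 (hne z hz),
    integral_add _ ((integrable_divergence_flux hu2 hcs h0).integrableOn.const_mul _),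
    integral_const_mul, setIntegral_divergence_flux_eq_zero hu2 hcs h0 hsupp, mul_zero, add_zero,
    integral_sub, integral_add, integral_sub, integral_add, integral_const_mul, integral_const_mul,
    integral_const_mul, integral_const_mul]
  all_goals
    refine (hcs.integrable_of_continuousAt (fun z hz => ?_) fun z hz => ?_).integrableOn
    · have hz0 := hne z (hsupp hz)
      fun_prop (disch := simp [hz0])
    · obtain ⟨h₀, h₁, h₂, h₃⟩ := hvan z hz
      simp [h₀, h₁, h₂, h₃]

/-- The weighted identity for `∫ (𝓛_m u)² |x|^α` on the annulus,
featuring the angular derivative `∂_θ u = x₁∂₂u − x₂∂₁u`. -/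
theorem statement2 (m α : ℝ) (hm : 1 < m) (a b : ℝ) (ha : 0 < a) (hab : a < b)
    (u : ℂ → ℝ) (hu : ContDiff ℝ (⊤ : ℕ∞) u) (hcs : IsCompact (tsupport u))
    (hsupp : tsupport u ⊆ ann a b) :
    (∫ z in ann a b, Lop m u z ^ 2 * ‖z‖ ^ α) =
      (∫ z in ann a b,
          (lap u z + (m ^ 2 - 1) * u z / ‖z‖ ^ 2) ^ 2 * ‖z‖ ^ α) +
        4 * (m ^ 2 - 1) *
          (∫ z in ann a b,
            ((z.re * pd1 u z + z.im * pd2 u z) / ‖z‖ ^ 2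
              - u z / ‖z‖ ^ 2) ^ 2 * ‖z‖ ^ α) -
        2 * α * (m - 1) *
          (∫ z in ann a b,
            ((z.re * pd1 u z + z.im * pd2 u z) / ‖z‖ ^ 2) ^ 2 *
              ‖z‖ ^ α) +
        2 * α * (m - 1) *
          (∫ z in ann a b,
            (z.re * pd2 u z - z.im * pd1 u z) ^ 2 / ‖z‖ ^ 4 *
              ‖z‖ ^ α) -
        2 * α * (m - 1) * (m ^ 2 - 1 + α) *
          (∫ z in ann a b, u z ^ 2 / ‖z‖ ^ 4 * ‖z‖ ^ α) :=
  statement2_general m α a b ha u hu hcs hsupp
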